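/- Every t-shape whose total exponent sum equals 1 and which is not the single-letter shape t is amenable; moreover its root is of the form t (t t⁻¹)^q for some q > 0. Symmetrically, every t-shape of total exponent sum −1 other than the single-letter shape t⁻¹ is amenable, with root of the form t⁻¹ (t⁻¹ t)^q for some q > 0. -/

import Mathlib

/-!
A *t-shape* is a finite cyclic word in the symbols `t` and `t⁻¹`.  We represent a
t-shape by a list of Booleans (`true` = `t` = `+1`, `false` = `t⁻¹` = `−1`),
regarded up to cyclic rotation (`ShapeRotEquiv`).
-/

/-- The `i`-th entry of a list, read cyclically. -/
def cyclicGet (l : List Bool) (i : ℕ) : Bool :=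
  l.getD (i % l.length) true

/-- Two lists represent the same cyclic word iff one is a rotation of the other. -/
def ShapeRotEquiv (l l' : List Bool) : Prop :=
  ∃ n : ℕ, l.rotate n = l'

/-- The entry at (cyclic) position `i` is deleted by the Magnus derivative:
either it is a `+1` immediately followed (cyclically) by a `−1`, or it is a `−1`
immediately preceded (cyclically) by a `+1`.  (Such occurrences of the subword
`t t⁻¹` are automatically pairwise disjoint.) -/
def magnusDeleted (l : List Bool) (i : ℕ) : Bool :=
  (cyclicGet l i && !cyclicGet l (i + 1)) ||
    (!cyclicGet l i && cyclicGet l (i + l.length - 1))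

/-- The Magnus derivative of a t-shape: simultaneously delete all cyclic
occurrences of the subword `t t⁻¹` and close up. -/
def magnusD (l : List Bool) : List Bool :=
  ((List.range l.length).filter (fun i => !magnusDeleted l i)).map (cyclicGet l)

/-- A power shape `t^q`, `q ∈ ℤ`: all entries equal (or the empty shape). -/
def IsPowerShape (l : List Bool) : Prop :=
  (∀ x ∈ l, x = true) ∨ (∀ x ∈ l, x = false)

/-- The complexity of a t-shape: the least `m ≥ 0` such that the `m`-th iterated
Magnus derivative is a power shape. -/
noncomputable def shapeComplexity (l : List Bool) : ℕ :=
  sInf {m : ℕ | IsPowerShape (magnusD^[m] l)}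

/-- The root of a t-shape of complexity `m ≥ 1`: its `(m−1)`-st Magnus derivative. -/
noncomputable def shapeRoot (l : List Bool) : List Bool :=
  magnusD^[shapeComplexity l - 1] l

/-- The inverse of a t-shape (invert all letters and reverse the order). -/
def shapeInv (l : List Bool) : List Bool :=
  (l.map (fun b => !b)).reverse

/-- A representative of the one-clump shape `t^p (t t⁻¹)^q`. -/
def oneClumpList (p q : ℕ) : List Bool :=
  List.replicate p true ++ (List.replicate q [true, false]).flatten

/-- A one-clump shape: a t-shape of the form `t^p (t t⁻¹)^q` (`p, q > 0`) or its inverse. -/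
def IsOneClumpShape (l : List Bool) : Prop :=
  ∃ p q : ℕ, 0 < p ∧ 0 < q ∧
    (ShapeRotEquiv l (oneClumpList p q) ∨ ShapeRotEquiv l (shapeInv (oneClumpList p q)))

/-- A t-shape is amenable if it has complexity at least 1 and its root is either
`t t⁻¹` or a one-clump shape. -/
def IsAmenableShape (l : List Bool) : Prop :=
  1 ≤ shapeComplexity l ∧
    (ShapeRotEquiv (shapeRoot l) [true, false] ∨ IsOneClumpShape (shapeRoot l))

/-- The total exponent sum of a t-shape. -/
def shapeExpSum (l : List Bool) : ℤ :=
  (l.map (fun b => if b then (1 : ℤ) else -1)).sum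


/-!
Deleting an occurrence of `t t⁻¹` removes one `+1` and one `−1`, so the Magnus derivative
preserves the exponent sum; it also strictly shortens every shape that is not a power shape.
Hence the derivatives of a shape of exponent sum `±1` end in the single letter `t^{±1}`, and its
root `R` is not a power shape while `D(R) = t^{±1}`. So exactly one letter of `R` survives.
Reading `R` from the letter after the survivor, every `t` must start a deleted pair and every
`t⁻¹` must end one, which forces `R` to be the survivor followed by `(t t⁻¹)^q`.
-/

theorem List.sum_map_add_one_of_periodic {M : Type*} [AddCancelCommMonoid M] {f : ℕ → M}
    {n : ℕ} (hf : Function.Periodic f n) :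
    ((List.range n).map fun i => f (i + 1)).sum = ((List.range n).map f).sum := by
  have h := (List.sum_range_succ f n).symm.trans (List.sum_range_succ' f n)
  rw [hf.eq, add_comm] at h
  exact (add_left_cancel h).symm

theorem List.map_range_two_mul_decide_even (q : ℕ) :
    (List.range (2 * q)).map (fun j => decide (j % 2 = 0)) =
      (List.replicate q [true, false]).flatten := by
  induction q with
  | zero => rfl
  | succ q ih =>
    rw [show 2 * (q + 1) = 2 * q + 1 + 1 by ring, List.range_succ, List.range_succ,
      List.replicate_succ', List.flatten_append, ← ih]
    simp

theorem List.flatten_replicate_pair_append {α : Type*} (a b : α) (q : ℕ) :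
    (List.replicate q [a, b]).flatten ++ [a] = a :: (List.replicate q [b, a]).flatten := by
  induction q with
  | zero => rfl
  | succ q ih => simp [List.replicate_succ, ih]

section CyclicGet

variable (l : List Bool)

theorem cyclicGet_periodic : Function.Periodic (cyclicGet l) l.length := by
  intro i
  simp [cyclicGet]

theorem cyclicGet_eq_getElem_mod (hn : 0 < l.length) (i : ℕ) :
    cyclicGet l i = l[i % l.length]'(Nat.mod_lt i hn) := by
  simp [cyclicGet, Nat.mod_lt i hn]

theorem cyclicGet_of_lt {i : ℕ} (hi : i < l.length) : cyclicGet l i = l[i] := by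
  simp [cyclicGet_eq_getElem_mod l (by omega), Nat.mod_eq_of_lt hi]

theorem map_range_cyclicGet : (List.range l.length).map (cyclicGet l) = l := by
  refine List.ext_getElem (by simp) fun i hi _ => ?_
  simp only [List.length_map, List.length_range] at hi
  simp [cyclicGet_of_lt l hi]

theorem cyclicGet_rotate (s i : ℕ) : cyclicGet (l.rotate s) i = cyclicGet l (i + s) := by
  rcases Nat.eq_zero_or_pos l.length with hn | hn
  · simp [List.length_eq_zero_iff.mp hn, cyclicGet]
  have hn' : 0 < (l.rotate s).length := by simpa using hn
  simp only [cyclicGet_eq_getElem_mod _ hn', cyclicGet_eq_getElem_mod _ hn, List.getElem_rotate,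
    List.length_rotate, Nat.mod_add_mod]

def pairHead (i : ℕ) : Bool := cyclicGet l i && !cyclicGet l (i + 1)

def pairTail (i : ℕ) : Bool := !cyclicGet l i && cyclicGet l (i + l.length - 1)

theorem magnusDeleted_eq_or (i : ℕ) : magnusDeleted l i = (pairHead l i || pairTail l i) := rfl

theorem pairHead_periodic : Function.Periodic (pairHead l) l.length := by
  intro i
  simp only [pairHead, Nat.add_right_comm i l.length 1, cyclicGet_periodic l _]

theorem pairTail_succ (i : ℕ) : pairTail l (i + 1) = pairHead l i := by
  rw [pairTail, pairHead, show i + 1 + l.length - 1 = i + l.length by omega, cyclicGet_periodic,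
    Bool.and_comm]

theorem pairTail_periodic : Function.Periodic (pairTail l) l.length := by
  intro i
  rw [pairTail, pairTail, cyclicGet_periodic, show i + l.length + l.length - 1 =
    i + l.length - 1 + l.length by omega, cyclicGet_periodic]

theorem magnusDeleted_periodic : Function.Periodic (magnusDeleted l) l.length := by
  intro i
  simp only [magnusDeleted_eq_or, pairHead_periodic l i, pairTail_periodic l i]

theorem magnusDeleted_rotate (s i : ℕ) :
    magnusDeleted (l.rotate s) i = magnusDeleted l (i + s) := by
  rcases Nat.eq_zero_or_pos l.length with hn | hn
  · simp [List.length_eq_zero_iff.mp hn, magnusDeleted, cyclicGet]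
  simp only [magnusDeleted, cyclicGet_rotate, List.length_rotate,
    show i + 1 + s = i + s + 1 by omega, show i + l.length - 1 + s = i + s + l.length - 1 by omega]

theorem shapeExpSum_magnusD : shapeExpSum (magnusD l) = shapeExpSum l := by
  let v : Bool → ℤ := fun b => if b then 1 else -1
  let ind : Bool → ℤ := fun b => if b then 1 else 0
  have hl : shapeExpSum l = ((List.range l.length).map fun i => v (cyclicGet l i)).sum := by
    conv_lhs => rw [← map_range_cyclicGet l]
    simp only [shapeExpSum, List.map_map]
    rfl
  have hD : shapeExpSum (magnusD l) = ((List.range l.length).map fun i =>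
      if magnusDeleted l i = false then v (cyclicGet l i) else 0).sum := by
    simp [shapeExpSum, magnusD, List.sum_map_ite, List.map_map, Function.comp_def, v]
  have hsplit (i : ℕ) : v (cyclicGet l i) + ind (pairTail l i) =
      (if magnusDeleted l i = false then v (cyclicGet l i) else 0) + ind (pairHead l i) := by
    have key : ∀ a b c : Bool, v a + ind (!a && c) =
        (if (a && !b || !a && c) = false then v a else 0) + ind (a && !b) := by decide
    exact key _ _ _
  have htail : ((List.range l.length).map fun i => ind (pairTail l i)).sum =
      ((List.range l.length).map fun i => ind (pairHead l i)).sum := by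
    have h := List.sum_map_add_one_of_periodic ((pairTail_periodic l).comp ind)
    simp only [Function.comp_apply, pairTail_succ] at h
    exact h.symm
  have hsum := congrArg (fun f => ((List.range l.length).map f).sum) (funext hsplit)
  simp only [List.sum_map_add, htail] at hsum
  rw [hl, hD]
  exact (add_right_cancel hsum).symm

end CyclicGet

section Iterates

variable {l : List Bool}

theorem exists_pairHead_of_not_isPowerShape (hl : ¬ IsPowerShape l) :
    ∃ i < l.length, pairHead l i = true := by
  by_contra! hno
  have hno' (i : ℕ) : pairHead l i = false := by
    rcases Nat.eq_zero_or_pos l.length with hn | hn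
    · exact absurd (Or.inl (by simp [List.length_eq_zero_iff.mp hn])) hl
    rw [← (pairHead_periodic l).map_mod_nat]
    simpa using hno _ (Nat.mod_lt i hn)
  have hpropagate {i : ℕ} (hi : cyclicGet l i = true) (j : ℕ) : cyclicGet l (i + j) = true := by
    induction j with
    | zero => exact hi
    | succ j ih => simpa [pairHead, ih, ← Nat.add_assoc] using hno' (i + j)
  simp only [IsPowerShape, not_or, not_forall] at hl
  obtain ⟨⟨x, hx, hxt⟩, ⟨y, hy, hyf⟩⟩ := hl
  obtain ⟨i, hi, rfl⟩ := List.getElem_of_mem hx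
  obtain ⟨k, hk, rfl⟩ := List.getElem_of_mem hy
  have h := hpropagate (i := k) (by simpa [cyclicGet_of_lt l hk] using hyf) (i + l.length - k)
  rw [show k + (i + l.length - k) = i + l.length by omega, cyclicGet_periodic,
    cyclicGet_of_lt l hi] at h
  exact hxt h

theorem length_magnusD_lt (hl : ¬ IsPowerShape l) : (magnusD l).length < l.length := by
  obtain ⟨i, hi, hhead⟩ := exists_pairHead_of_not_isPowerShape hl
  rw [magnusD, List.length_map]
  refine lt_of_lt_of_eq ?_ (List.length_range (n := l.length))
  exact (List.length_filter_lt_length_iff_exists (p := fun i => !magnusDeleted l i)).mpr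
    ⟨i, List.mem_range.mpr hi, by simp [magnusDeleted_eq_or, hhead]⟩

theorem exists_isPowerShape_iterate_magnusD (l : List Bool) :
    ∃ m, IsPowerShape (magnusD^[m] l) := by
  by_cases hl : IsPowerShape l
  · exact ⟨0, hl⟩
  · obtain ⟨m, hm⟩ := exists_isPowerShape_iterate_magnusD (magnusD l)
    exact ⟨m + 1, hm⟩
termination_by l.length
decreasing_by exact length_magnusD_lt hl

variable (l) in
theorem shapeExpSum_iterate_magnusD (m : ℕ) : shapeExpSum (magnusD^[m] l) = shapeExpSum l := by
  induction m with
  | zero => rfl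
  | succ m ih => rw [Function.iterate_succ_apply', shapeExpSum_magnusD, ih]

theorem shapeComplexity_pos (hl : ¬ IsPowerShape l) : 0 < shapeComplexity l := by
  refine Nat.pos_of_ne_zero fun h => ?_
  rcases Nat.sInf_eq_zero.mp h with h0 | hempty
  · exact hl h0
  · exact Set.nonempty_iff_ne_empty.mp (exists_isPowerShape_iterate_magnusD l) hempty

theorem not_isPowerShape_shapeRoot (hl : ¬ IsPowerShape l) : ¬ IsPowerShape (shapeRoot l) :=
  Nat.notMem_of_lt_sInf (Nat.sub_lt (shapeComplexity_pos hl) one_pos)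

theorem isPowerShape_magnusD_shapeRoot (hl : ¬ IsPowerShape l) :
    IsPowerShape (magnusD (shapeRoot l)) := by
  rw [shapeRoot, ← Function.iterate_succ_apply' magnusD, Nat.succ_eq_add_one,
    Nat.sub_add_cancel (shapeComplexity_pos hl)]
  exact Nat.sInf_mem (exists_isPowerShape_iterate_magnusD l)

theorem eq_singleton_of_isPowerShape {b : Bool} (hl : IsPowerShape l)
    (hs : shapeExpSum l = shapeExpSum [b]) : l = [b] := by
  rcases hl with h | h <;>
  · rw [List.eq_replicate_of_mem h] at hs ⊢
    cases b <;> simp [shapeExpSum] at hs ⊢ <;> simp_all <;> omega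

end Iterates

def OnlyFirstSurvives (w : List Bool) : Prop :=
  magnusDeleted w 0 = false ∧ ∀ i, 0 < i → i < w.length → magnusDeleted w i = true

theorem OnlyFirstSurvives.cyclicGet_eq_decide_odd {w : List Bool} (hw : OnlyFirstSurvives w)
    {i : ℕ} (hi0 : 0 < i) (hi : i < w.length) : cyclicGet w i = decide (i % 2 = 1) := by
  obtain ⟨hkept, hdel⟩ := hw
  have hprev (j : ℕ) : cyclicGet w (j + 1 + w.length - 1) = cyclicGet w j := by
    rw [show j + 1 + w.length - 1 = j + w.length by omega, cyclicGet_periodic]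
  induction i, hi0 using Nat.le_induction with
  | base =>
    have h1 := hdel 1 one_pos hi
    simp only [magnusDeleted] at hkept h1
    rw [show 1 + w.length - 1 = 0 + w.length by omega, cyclicGet_periodic] at h1
    cases cyclicGet w 0 <;> cases h1' : cyclicGet w 1 <;> simp_all
  | succ i hi0 ih =>
    have ih := ih (by omega)
    have hi' := hdel i hi0 (by omega)
    have hi1 := hdel (i + 1) (by omega) hi
    simp only [magnusDeleted, hprev] at hi' hi1
    have hparity : (i + 1) % 2 = 1 ↔ ¬ i % 2 = 1 := by omega
    rw [decide_eq_decide.mpr hparity, decide_not, ← ih]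
    generalize cyclicGet w i = a at hi' hi1 ⊢
    generalize cyclicGet w (i + 1) = b at hi' hi1 ⊢
    cases a <;> cases b <;> simp_all

theorem OnlyFirstSurvives.length_odd {w : List Bool} (hw : OnlyFirstSurvives w)
    (hne : w ≠ []) : w.length % 2 = 1 := by
  by_contra heven
  have hlen : 2 ≤ w.length := by
    have := List.length_pos_iff.mpr hne
    omega
  have hlast := hw.cyclicGet_eq_decide_odd (i := w.length - 1) (by omega) (by omega)
  rw [decide_eq_true (by omega)] at hlast
  obtain ⟨hkept, hdel⟩ := hw
  have hdel_last := hdel (w.length - 1) (by omega) (by omega)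
  have hwrap : cyclicGet w w.length = cyclicGet w 0 := by simpa using cyclicGet_periodic w 0
  simp only [magnusDeleted, Nat.sub_add_cancel (by omega : 1 ≤ w.length), Nat.zero_add, hwrap,
    hlast] at hkept hdel_last
  cases cyclicGet w 0 <;> simp_all

theorem OnlyFirstSurvives.eq_cons_flatten {w : List Bool} (hw : OnlyFirstSurvives w)
    (hne : w ≠ []) : ∃ q, w = cyclicGet w 0 :: (List.replicate q [true, false]).flatten := by
  obtain ⟨q, hq⟩ : ∃ q, w.length = 2 * q + 1 :=
    ⟨w.length / 2, by have := hw.length_odd hne; omega⟩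
  refine ⟨q, ?_⟩
  conv_lhs =>
    rw [← map_range_cyclicGet w, hq, List.range_succ_eq_map, List.map_cons, List.map_map]
  rw [← List.map_range_two_mul_decide_even]
  refine congrArg _ (List.map_congr_left fun j hj => ?_)
  rw [List.mem_range] at hj
  rw [Function.comp_apply, hw.cyclicGet_eq_decide_odd (by omega) (by omega)]
  exact decide_eq_decide.mpr (by omega)

theorem exists_rotate_eq_cons_flatten_of_magnusD_eq_singleton {l : List Bool} {b : Bool}
    (hD : magnusD l = [b]) :
    ∃ s q, l.rotate s = b :: (List.replicate q [true, false]).flatten := by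
  obtain ⟨s, hK, hsb⟩ := List.map_eq_singleton_iff.mp hD
  have hkept_iff (i : ℕ) : i < l.length ∧ magnusDeleted l i = false ↔ i ∈ [s] := by
    rw [← List.mem_singleton, ← hK]
    simp
  obtain ⟨hs, hs_kept⟩ := (hkept_iff s).mpr (List.mem_singleton_self s)
  have hne : l.rotate s ≠ [] := by
    rw [Ne, List.rotate_eq_nil_iff, ← List.length_eq_zero_iff]
    omega
  have hw : OnlyFirstSurvives (l.rotate s) := by
    refine ⟨by rwa [magnusDeleted_rotate, zero_add], fun i hi0 hi => ?_⟩
    rw [List.length_rotate] at hi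
    rw [magnusDeleted_rotate, ← (magnusDeleted_periodic l).map_mod_nat]
    by_contra h
    have h := List.mem_singleton.mp
      ((hkept_iff _).mp ⟨Nat.mod_lt _ (by omega), by simpa using h⟩)
    rw [Nat.add_mod_eq_ite, Nat.mod_eq_of_lt hi, Nat.mod_eq_of_lt hs] at h
    split_ifs at h <;> omega
  obtain ⟨q, hq⟩ := hw.eq_cons_flatten hne
  rw [cyclicGet_rotate, zero_add, hsb] at hq
  exact ⟨s, q, hq⟩

theorem shapeInv_oneClumpList_one (q : ℕ) :
    shapeInv (oneClumpList 1 q) = (List.replicate q [true, false]).flatten ++ [false] := by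
  simp [shapeInv, oneClumpList, List.map_flatten, List.reverse_flatten]

theorem shapeRoot_isRotated_of_shapeExpSum_eq {l : List Bool} {b : Bool}
    (hs : shapeExpSum l = shapeExpSum [b]) (hne : l ≠ [b]) :
    0 < shapeComplexity l ∧
      ∃ q, 0 < q ∧ shapeRoot l ~r b :: (List.replicate q [true, false]).flatten := by
  have hl : ¬ IsPowerShape l := fun hp => hne (eq_singleton_of_isPowerShape hp hs)
  have hD : magnusD (shapeRoot l) = [b] :=
    eq_singleton_of_isPowerShape (isPowerShape_magnusD_shapeRoot hl) <| by
      rw [shapeExpSum_magnusD, shapeRoot, shapeExpSum_iterate_magnusD, hs]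
  obtain ⟨s, q, hsq⟩ := exists_rotate_eq_cons_flatten_of_magnusD_eq_singleton hD
  refine ⟨shapeComplexity_pos hl, q, Nat.pos_of_ne_zero ?_, s, hsq⟩
  rintro rfl
  rw [List.replicate_zero, List.flatten_nil, List.rotate_eq_singleton_iff] at hsq
  exact not_isPowerShape_shapeRoot hl (hsq ▸ (by cases b <;> simp [IsPowerShape]))

/-- Every t-shape of total exponent sum `1` which is not the
single-letter shape `t` is amenable, with root of the form `t (t t⁻¹)^q` for some
`q > 0`; symmetrically, every t-shape of total exponent sum `−1` other than the
single-letter shape `t⁻¹` is amenable, with root of the form `t⁻¹ (t⁻¹ t)^q` for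
some `q > 0`. -/
theorem exponent_sum_one_amenable :
    (∀ l : List Bool, shapeExpSum l = 1 → l ≠ [true] →
      IsAmenableShape l ∧
        ∃ q : ℕ, 0 < q ∧
          ShapeRotEquiv (shapeRoot l) (true :: (List.replicate q [true, false]).flatten)) ∧
    (∀ l : List Bool, shapeExpSum l = -1 → l ≠ [false] →
      IsAmenableShape l ∧
        ∃ q : ℕ, 0 < q ∧
          ShapeRotEquiv (shapeRoot l) (false :: (List.replicate q [false, true]).flatten)) := by
  refine ⟨fun l hs hne => ?_, fun l hs hne => ?_⟩
  · obtain ⟨hpos, q, hq, hrot⟩ := shapeRoot_isRotated_of_shapeExpSum_eq (hs.trans rfl) hne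
    exact ⟨⟨hpos, .inr ⟨1, q, one_pos, hq, .inl hrot⟩⟩, q, hq, hrot⟩
  · obtain ⟨hpos, q, hq, hrot⟩ := shapeRoot_isRotated_of_shapeExpSum_eq (hs.trans rfl) hne
    have hinv : shapeRoot l ~r shapeInv (oneClumpList 1 q) := by
      rw [shapeInv_oneClumpList_one]
      exact hrot.trans (List.isRotated_concat _ _).symm
    rw [← List.flatten_replicate_pair_append] at hrot
    exact ⟨⟨hpos, .inr ⟨1, q, one_pos, hq, .inr hinv⟩⟩, q, hq,
      hrot.trans (List.isRotated_concat _ _)⟩
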